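/- arXiv:2506.20568 — 5 statements merged into one kernel-verified Lean document; each statement's English description precedes it below -/
import Mathlib

section
/- Let e be a nonzero proper subdimension vector of d. Then the wall W_e equals Cone(e) ∩ Cone(d − e), where Cone(f) denotes the set of stability parameters θ in the orthogonal complement of d for which a θ-semistable representation of dimension vector f exists, and W_e is the set of θ with θ(e) = 0 such that some θ-semistable representation of dimension vector d has a subrepresentation of dimension vector e. -/
/-!
If `M` is `θ`-semistable and `N ⊆ M` is a subrepresentation with `θ(N) = 0`, then `N` and
`M / N` are `θ`-semistable: a subrepresentation of `N` is one of `M`, and the preimage in `M` of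
a subrepresentation `X` of `M / N` has `θ`-value `θ(N) + θ(X) = θ(X)`. Conversely `A ⊕ B` is
`θ`-semistable when `A` and `B` are, since a subrepresentation `X ⊆ A ⊕ B` is an extension of
its projection to `A` by its intersection with `B`. The pair `(N, M / N)` gives
`W_e ⊆ Cone(e) ∩ Cone(d - e)`, and `A ⊆ A ⊕ B` gives the reverse inclusion.
-/

open scoped BigOperators

/-- A representation of a quiver with vertex set `Q0` and arrow set `Q1`
(with source and target maps `s t : Q1 → Q0`) over a field `k`:
a finite-dimensional `k`-vector space at each vertex and a linear map for each arrow. -/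
structure QRep (k : Type) [Field k] {Q0 Q1 : Type} (s t : Q1 → Q0) where
  V : Q0 → Type
  [addgrp : ∀ i, AddCommGroup (V i)]
  [mod : ∀ i, Module k (V i)]
  [fd : ∀ i, FiniteDimensional k (V i)]
  hom : ∀ a : Q1, V (s a) →ₗ[k] V (t a)

attribute [instance] QRep.addgrp QRep.mod QRep.fd

namespace QRep

variable {k : Type} [Field k] {Q0 Q1 : Type} {s t : Q1 → Q0}

/-- The dimension vector of a representation. -/
noncomputable def dimVec (M : QRep k s t) : Q0 → ℕ := fun i => Module.finrank k (M.V i)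

/-- A family of subspaces is a subrepresentation if it is invariant under all arrow maps. -/
def IsSubrep (M : QRep k s t) (U : ∀ i, Submodule k (M.V i)) : Prop :=
  ∀ a : Q1, ∀ x ∈ U (s a), M.hom a x ∈ U (t a)

/-- The dimension vector of a family of subspaces. -/
noncomputable def subDim (M : QRep k s t) (U : ∀ i, Submodule k (M.V i)) : Q0 → ℕ :=
  fun i => Module.finrank k (U i)

/-- The subrepresentation determined by an invariant family of subspaces. -/
def subRep (M : QRep k s t) (U : ∀ i, Submodule k (M.V i)) (h : M.IsSubrep U) :
    QRep k s t where
  V := fun i => U i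
  hom := fun a => (M.hom a).restrict (fun x hx => h a x hx)

/-- The quotient representation by an invariant family of subspaces. -/
def quotRep (M : QRep k s t) (U : ∀ i, Submodule k (M.V i)) (h : M.IsSubrep U) :
    QRep k s t where
  V := fun i => M.V i ⧸ U i
  hom := fun a => (U (s a)).mapQ (U (t a)) (M.hom a) (fun x hx => h a x hx)

/-- Direct sum of two representations. -/
def dsum (M N : QRep k s t) : QRep k s t where
  V := fun i => M.V i × N.V i
  hom := fun a => (M.hom a).prodMap (N.hom a)

variable [Fintype Q0]

/-- The pairing `θ(d) = θ · d` of a stability parameter with a dimension vector. -/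
def pair (θ : Q0 → ℝ) (d : Q0 → ℕ) : ℝ := ∑ i, θ i * (d i : ℝ)

/-- `θ`-semistability: `θ(M) = 0` and `θ(M') ≤ 0` for all subrepresentations. -/
def Semistable (θ : Q0 → ℝ) (M : QRep k s t) : Prop :=
  pair θ M.dimVec = 0 ∧
    ∀ U : ∀ i, Submodule k (M.V i), M.IsSubrep U → pair θ (M.subDim U) ≤ 0

/-- `θ`-stability: `θ(M) = 0` and `θ(M') < 0` for all proper nonzero subrepresentations. -/
def Stable (θ : Q0 → ℝ) (M : QRep k s t) : Prop :=
  pair θ M.dimVec = 0 ∧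
    ∀ U : ∀ i, Submodule k (M.V i), M.IsSubrep U →
      U ≠ (fun _ => ⊥) → U ≠ (fun _ => ⊤) → pair θ (M.subDim U) < 0

end QRep

section Defs

variable (k : Type) [Field k] {Q0 Q1 : Type} (s t : Q1 → Q0)

/-- `e` is a generic subdimension vector of `d` (Schofield's characterization as definition):
every representation of dimension vector `d` admits a subrepresentation of dimension vector `e`. -/
def GenericSub (e d : Q0 → ℕ) : Prop :=
  e ≤ d ∧ ∀ M : QRep k s t, M.dimVec = d →
    ∃ U : ∀ i, Submodule k (M.V i), M.IsSubrep U ∧ M.subDim U = e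

variable [Fintype Q0]

/-- The semistable cone of `d`: stability parameters orthogonal to `d` admitting a
semistable representation of dimension vector `d`. -/
def SstCone (d : Q0 → ℕ) : Set (Q0 → ℝ) :=
  {θ | QRep.pair θ d = 0 ∧ ∃ M : QRep k s t, M.dimVec = d ∧ QRep.Semistable θ M}

/-- The wall `W_e`: parameters `θ` orthogonal to `d` and `e` such that some `θ`-semistable
representation of dimension vector `d` has a subrepresentation of dimension vector `e`. -/
def Wall (d e : Q0 → ℕ) : Set (Q0 → ℝ) :=
  {θ | QRep.pair θ d = 0 ∧ QRep.pair θ e = 0 ∧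
    ∃ (M : QRep k s t) (U : ∀ i, Submodule k (M.V i)),
      M.dimVec = d ∧ M.IsSubrep U ∧ M.subDim U = e ∧ QRep.Semistable θ M}

/-- GIT equivalence of stability parameters: equal semistable loci. -/
def GITEquiv (d : Q0 → ℕ) (θ η : Q0 → ℝ) : Prop :=
  ∀ M : QRep k s t, M.dimVec = d → (QRep.Semistable θ M ↔ QRep.Semistable η M)

end Defs

/-- The hyperplane `H_e` inside the stability space of `d`. -/
def Hset {Q0 : Type} [Fintype Q0] (d e : Q0 → ℕ) : Set (Q0 → ℝ) :=
  {θ | QRep.pair θ d = 0 ∧ QRep.pair θ e = 0}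

section Euler

variable {Q0 Q1 : Type} [Fintype Q0] [Fintype Q1]

/-- The Euler form of the quiver. -/
def euler (s t : Q1 → Q0) (x y : Q0 → ℤ) : ℤ :=
  (∑ i, x i * y i) - ∑ a, x (s a) * y (t a)

/-- `ext(d, e)`: the maximum of `−⟨d', e⟩` over generic subdimension vectors `d' ↪ d`. -/
noncomputable def extGen (k : Type) [Field k] (s t : Q1 → Q0) (d e : Q0 → ℕ) : ℤ :=
  sSup {z : ℤ | ∃ d' : Q0 → ℕ, GenericSub k s t d' d ∧
    z = -(euler s t (fun i => (d' i : ℤ)) (fun i => (e i : ℤ)))}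

end Euler

section Schur

variable {Q0 Q1 : Type} (s t : Q1 → Q0)

/-- Coordinates on the representation space `Rep(Q, d)`. -/
def RepCoords (d : Q0 → ℕ) : Type := Σ a : Q1, Fin (d (t a)) × Fin (d (s a))

/-- The representation associated to a point of the representation space. -/
def matToRep (k : Type) [Field k] (d : Q0 → ℕ)
    (m : ∀ a : Q1, Matrix (Fin (d (t a))) (Fin (d (s a))) k) : QRep k s t where
  V := fun i => Fin (d i) → k
  hom := fun a => Matrix.mulVecLin (m a)

/-- A nonzero representation is indecomposable if it is not a direct sum of two nonzero
subrepresentations. -/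
def Indecomposable (k : Type) [Field k] (M : QRep k s t) : Prop :=
  (∃ i, Module.finrank k (M.V i) ≠ 0) ∧
    ¬ ∃ U W : ∀ i, Submodule k (M.V i), M.IsSubrep U ∧ M.IsSubrep W ∧
        U ≠ (fun _ => ⊥) ∧ W ≠ (fun _ => ⊥) ∧ ∀ i, IsCompl (U i) (W i)

/-- `d` is a Schur root: a general representation of dimension vector `d` is indecomposable,
i.e. all representations outside the vanishing locus of some nonzero polynomial on the
representation space are indecomposable. -/
def IsSchurRoot (k : Type) [Field k] (d : Q0 → ℕ) : Prop :=
  ∃ p : MvPolynomial (RepCoords s t d) k, p ≠ 0 ∧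
    ∀ m : ∀ a : Q1, Matrix (Fin (d (t a))) (Fin (d (s a))) k,
      MvPolynomial.eval (fun x => m x.1 x.2.1 x.2.2) p ≠ 0 →
        Indecomposable s t k (matToRep s t k d m)

end Schur

section LinearAlgebra

variable {k V W : Type} [Field k] [AddCommGroup V] [Module k V] [AddCommGroup W] [Module k W]

theorem Submodule.finrank_map_add_finrank_inf_ker [FiniteDimensional k V]
    (X : Submodule k V) (f : V →ₗ[k] W) :
    Module.finrank k (X.map f) + Module.finrank k ↥(X ⊓ LinearMap.ker f)
      = Module.finrank k X := by
  rw [← Submodule.map_comap_subtype, Submodule.finrank_map_subtype_eq,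
    ← LinearMap.ker_domRestrict, ← LinearMap.range_domRestrict]
  exact (f.domRestrict X).finrank_range_add_finrank_ker

theorem Submodule.finrank_comap_mkQ [FiniteDimensional k V] (U : Submodule k V)
    (X : Submodule k (V ⧸ U)) :
    Module.finrank k (X.comap U.mkQ) = Module.finrank k U + Module.finrank k X := by
  have hU : X.comap U.mkQ ⊓ LinearMap.ker U.mkQ = U := by
    rw [Submodule.ker_mkQ, inf_eq_right]
    exact U.le_comap_mkQ X
  rw [← (X.comap U.mkQ).finrank_map_add_finrank_inf_ker U.mkQ, hU,
    Submodule.map_comap_eq_of_surjective U.mkQ_surjective, add_comm]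

theorem Submodule.finrank_map_fst_add_finrank_comap_inr [FiniteDimensional k V]
    [FiniteDimensional k W] (X : Submodule k (V × W)) :
    Module.finrank k (X.map (LinearMap.fst k V W))
      + Module.finrank k (X.comap (LinearMap.inr k V W)) = Module.finrank k X := by
  have hker : X ⊓ LinearMap.ker (LinearMap.fst k V W)
      = (X.comap (LinearMap.inr k V W)).map (LinearMap.inr k V W) := by
    rw [LinearMap.ker_fst, Submodule.map_comap_eq, LinearMap.range_inr, inf_comm]
  rw [← X.finrank_map_add_finrank_inf_ker (LinearMap.fst k V W), hker,
    ← (Submodule.equivMapOfInjective _ LinearMap.inr_injective _).finrank_eq]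

end LinearAlgebra

namespace QRep

variable {k : Type} [Field k] {Q0 Q1 : Type} {s t : Q1 → Q0}

theorem pair_add [Fintype Q0] (θ : Q0 → ℝ) (x y : Q0 → ℕ) :
    pair θ (x + y) = pair θ x + pair θ y := by
  simp only [pair, Pi.add_apply, Nat.cast_add, mul_add, Finset.sum_add_distrib]

section Dimensions

variable (M : QRep k s t) {U : ∀ i, Submodule k (M.V i)} (hU : M.IsSubrep U)

theorem subDim_add_dimVec_quotRep : M.subDim U + (M.quotRep U hU).dimVec = M.dimVec :=
  funext fun i => (add_comm _ _).trans (U i).finrank_quotient_add_finrank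

theorem dimVec_dsum (N : QRep k s t) : (M.dsum N).dimVec = M.dimVec + N.dimVec :=
  funext fun _ => Module.finrank_prod

theorem isSubrep_range_inl (N : QRep k s t) :
    (M.dsum N).IsSubrep fun i => LinearMap.range (LinearMap.inl k (M.V i) (N.V i)) := by
  rintro a _ ⟨x, rfl⟩
  exact ⟨M.hom a x, Prod.ext rfl (map_zero (N.hom a)).symm⟩

theorem subDim_range_inl (N : QRep k s t) :
    (M.dsum N).subDim (fun i => LinearMap.range (LinearMap.inl k (M.V i) (N.V i))) = M.dimVec :=
  funext fun _ => LinearMap.finrank_range_of_inj LinearMap.inl_injective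

end Dimensions

section Transport

variable {M : QRep k s t} {U : ∀ i, Submodule k (M.V i)} (hU : M.IsSubrep U)

theorem IsSubrep.map_subtype {W : ∀ i, Submodule k ((M.subRep U hU).V i)}
    (hW : (M.subRep U hU).IsSubrep W) : M.IsSubrep fun i => (W i).map (U i).subtype := by
  rintro a _ ⟨x, hx, rfl⟩
  exact ⟨(M.subRep U hU).hom a x, hW a x hx, rfl⟩

theorem subDim_map_subtype (W : ∀ i, Submodule k ((M.subRep U hU).V i)) :
    M.subDim (fun i => (W i).map (U i).subtype) = (M.subRep U hU).subDim W :=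
  funext fun i => (U i).finrank_map_subtype_eq (W i)

theorem IsSubrep.comap_mkQ {W : ∀ i, Submodule k ((M.quotRep U hU).V i)}
    (hW : (M.quotRep U hU).IsSubrep W) : M.IsSubrep fun i => (W i).comap (U i).mkQ :=
  fun a _ hx => hW a _ hx

theorem subDim_comap_mkQ (W : ∀ i, Submodule k ((M.quotRep U hU).V i)) :
    M.subDim (fun i => (W i).comap (U i).mkQ) = M.subDim U + (M.quotRep U hU).subDim W :=
  funext fun i => (U i).finrank_comap_mkQ (W i)

end Transport

section DirectSum

variable {A B : QRep k s t} {X : ∀ i, Submodule k ((A.dsum B).V i)}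

theorem IsSubrep.map_fst (hX : (A.dsum B).IsSubrep X) :
    A.IsSubrep fun i => (X i).map (LinearMap.fst k (A.V i) (B.V i)) := by
  rintro a _ ⟨x, hx, rfl⟩
  exact ⟨(A.dsum B).hom a x, hX a x hx, rfl⟩

theorem IsSubrep.comap_inr (hX : (A.dsum B).IsSubrep X) :
    B.IsSubrep fun i => (X i).comap (LinearMap.inr k (A.V i) (B.V i)) := by
  intro a x hx
  have h := hX a _ hx
  rwa [show (A.dsum B).hom a (LinearMap.inr k _ _ x) = LinearMap.inr k _ _ (B.hom a x) from
    Prod.ext (map_zero (A.hom a)) rfl] at h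

theorem subDim_dsum (X : ∀ i, Submodule k ((A.dsum B).V i)) :
    (A.dsum B).subDim X = A.subDim (fun i => (X i).map (LinearMap.fst k (A.V i) (B.V i)))
      + B.subDim (fun i => (X i).comap (LinearMap.inr k (A.V i) (B.V i))) :=
  funext fun i => ((X i).finrank_map_fst_add_finrank_comap_inr).symm

end DirectSum

section Semistability

variable [Fintype Q0] {θ : Q0 → ℝ}

theorem Semistable.subRep {M : QRep k s t} (hM : Semistable θ M) {U : ∀ i, Submodule k (M.V i)}
    (hU : M.IsSubrep U) (hθU : pair θ (M.subDim U) = 0) : Semistable θ (M.subRep U hU) :=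
  ⟨hθU, fun W hW => subDim_map_subtype hU W ▸ hM.2 _ (IsSubrep.map_subtype hU hW)⟩

theorem Semistable.quotRep {M : QRep k s t} (hM : Semistable θ M) {U : ∀ i, Submodule k (M.V i)}
    (hU : M.IsSubrep U) (hθU : pair θ (M.subDim U) = 0) : Semistable θ (M.quotRep U hU) := by
  refine ⟨?_, fun W hW => ?_⟩
  · have h := congrArg (pair θ) (M.subDim_add_dimVec_quotRep hU)
    rwa [pair_add, hθU, hM.1, zero_add] at h
  · have h := hM.2 _ (IsSubrep.comap_mkQ hU hW)
    rwa [subDim_comap_mkQ, pair_add, hθU, zero_add] at h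

theorem Semistable.dsum {A B : QRep k s t} (hA : Semistable θ A) (hB : Semistable θ B) :
    Semistable θ (A.dsum B) := by
  refine ⟨?_, fun X hX => ?_⟩
  · rw [dimVec_dsum, pair_add, hA.1, hB.1, add_zero]
  · rw [subDim_dsum, pair_add]
    exact add_nonpos (hA.2 _ hX.map_fst) (hB.2 _ hX.comap_inr)

end Semistability

end QRep

theorem stmt2_general (k : Type) [Field k] {Q0 Q1 : Type} [Fintype Q0] (s t : Q1 → Q0)
    (d e : Q0 → ℕ) (hle : e ≤ d) :
    Wall k s t d e = SstCone k s t e ∩ SstCone k s t (fun i => d i - e i) := by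
  have hsplit : e + (d - e) = d := add_tsub_cancel_of_le hle
  have hpair : ∀ θ, QRep.pair θ d = QRep.pair θ e + QRep.pair θ (d - e) := fun θ => by
    rw [← QRep.pair_add, hsplit]
  ext θ
  constructor
  · rintro ⟨hθd, hθe, M, U, rfl, hU, rfl, hM⟩
    refine ⟨⟨hθe, M.subRep U hU, rfl, hM.subRep hU hθe⟩,
      ⟨?_, M.quotRep U hU, ?_, hM.quotRep hU hθe⟩⟩
    · show QRep.pair θ (M.dimVec - M.subDim U) = 0
      linarith [hpair θ]
    · exact (tsub_eq_of_eq_add_rev (M.subDim_add_dimVec_quotRep hU).symm).symm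
  · rintro ⟨⟨hθe, A, hA, hAss⟩, ⟨hθde, B, hB, hBss⟩⟩
    refine ⟨by rw [hpair, hθe, zero_add]; exact hθde, hθe, A.dsum B, _, ?_,
      A.isSubrep_range_inl B, (A.subDim_range_inl B).trans hA, hAss.dsum hBss⟩
    rw [QRep.dimVec_dsum, hA, hB]
    exact hsplit

/-- for a nonzero proper subdimension vector `e` of `d`,
`W_e = Cone(e) ∩ Cone(d − e)`. -/
theorem stmt2 (k : Type) [Field k] {Q0 Q1 : Type} [Fintype Q0] (s t : Q1 → Q0)
    (d e : Q0 → ℕ) (hle : e ≤ d) (hne : e ≠ 0) (hprop : e ≠ d) :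
    Wall k s t d e = SstCone k s t e ∩ SstCone k s t (fun i => d i - e i) :=
  stmt2_general k s t d e hle
end

section
/- A stability parameter θ orthogonal to d admits a strictly θ-semistable representation of dimension vector d (i.e. the θ-semistable locus strictly contains the θ-stable locus) if and only if θ lies in W_e for some nonzero proper subdimension vector e of d. -/
open scoped BigOperators

/-- a stability parameter `θ` orthogonal to `d` admits a strictly
`θ`-semistable representation of dimension vector `d` iff `θ ∈ W_e` for some nonzero
proper subdimension vector `e` of `d`. -/
theorem stmt3 (k : Type) [Field k] {Q0 Q1 : Type} [Fintype Q0] (s t : Q1 → Q0)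
    (d : Q0 → ℕ) (θ : Q0 → ℝ) (hθ : QRep.pair θ d = 0) :
    (∃ M : QRep k s t, M.dimVec = d ∧ QRep.Semistable θ M ∧ ¬ QRep.Stable θ M) ↔
      ∃ e : Q0 → ℕ, e ≤ d ∧ e ≠ 0 ∧ e ≠ d ∧ θ ∈ Wall k s t d e := by
  constructor
  · rintro ⟨M, hMd, hss, hns⟩
    rw [QRep.Stable] at hns
    push_neg at hns
    obtain ⟨U, hU, hUbot, hUtop, hUpair⟩ := hns hss.1
    have hpe : QRep.pair θ (M.subDim U) = 0 := le_antisymm (hss.2 U hU) hUpair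
    refine ⟨M.subDim U, ?_, ?_, ?_, hθ, hpe, M, U, hMd, hU, rfl, hss⟩
    · intro i
      have := Submodule.finrank_le (U i)
      simpa [QRep.subDim, ← hMd, QRep.dimVec] using this
    · intro h
      apply hUbot
      funext i
      have : Module.finrank k (U i) = 0 := congrFun h i
      exact Submodule.finrank_eq_zero.mp this
    · intro h
      apply hUtop
      funext i
      have h1 : Module.finrank k (U i) = d i := congrFun h i
      have h2 : Module.finrank k (M.V i) = d i := congrFun hMd i
      exact Submodule.eq_top_of_finrank_eq (h1.trans h2.symm)
  · rintro ⟨e, hed, he0, hedne, hd0, he0', M, U, hMd, hU, hUe, hss⟩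
    refine ⟨M, hMd, hss, ?_⟩
    rintro ⟨-, hst⟩
    have hUbot : U ≠ fun _ => ⊥ := by
      intro h
      apply he0
      rw [← hUe, h]
      funext i
      simp [QRep.subDim]
    have hUtop : U ≠ fun _ => ⊤ := by
      intro h
      apply hedne
      rw [← hUe, h]
      funext i
      have h2 : Module.finrank k (M.V i) = d i := congrFun hMd i
      simpa [QRep.subDim] using h2
    have := hst U hU hUbot hUtop
    rw [hUe, he0'] at this
    exact lt_irrefl 0 this
end

section
/- Let θ be a stability parameter orthogonal to d. Then there exists ε > 0 such that for all η orthogonal to d with ‖θ − η‖ < ε, every η-semistable representation of dimension vector d is also θ-semistable. -/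
open scoped BigOperators

/-- semistable loci shrink in a small enough neighborhood of `θ` inside the
stability space of `d`. -/
theorem stmt9 {k : Type} [Field k] {Q0 Q1 : Type} [Fintype Q0] {s t : Q1 → Q0}
    (d : Q0 → ℕ) (θ : Q0 → ℝ) (hθ : QRep.pair θ d = 0) :
    ∃ ε > (0 : ℝ), ∀ η : Q0 → ℝ, QRep.pair η d = 0 → ‖θ - η‖ < ε →
      ∀ M : QRep k s t, M.dimVec = d → QRep.Semistable η M → QRep.Semistable θ M := by
  classical
  set C : ℝ := (∑ i, (d i : ℝ)) + 1 with hC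
  have hCpos : 0 < C := by
    have : (0 : ℝ) ≤ ∑ i, (d i : ℝ) := Finset.sum_nonneg fun i _ => by positivity
    linarith
  set F : Finset (Q0 → ℕ) := Fintype.piFinset fun i => Finset.range (d i + 1) with hF
  set S : Finset (Q0 → ℕ) := F.filter (fun e => 0 < QRep.pair θ e) with hS
  -- key bound: |pair δ e| small for e ≤ d
  have key : ∀ (δ : Q0 → ℝ) (e : Q0 → ℕ), (∀ i, e i ≤ d i) →
      QRep.pair δ e ≤ ‖δ‖ * C := by
    intro δ e he
    have h1 : QRep.pair δ e ≤ ∑ i, ‖δ‖ * (d i : ℝ) := by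
      apply Finset.sum_le_sum
      intro i _
      have h2 : δ i * (e i : ℝ) ≤ |δ i| * (e i : ℝ) := by
        apply mul_le_mul_of_nonneg_right (le_abs_self _) (by positivity)
      have h3 : |δ i| ≤ ‖δ‖ := by
        simpa using norm_le_pi_norm δ i
      have h4 : (e i : ℝ) ≤ (d i : ℝ) := by exact_mod_cast he i
      calc δ i * (e i : ℝ) ≤ |δ i| * (e i : ℝ) := h2
        _ ≤ ‖δ‖ * (d i : ℝ) := by
            apply mul_le_mul h3 h4 (by positivity) (norm_nonneg _)
    calc QRep.pair δ e ≤ ∑ i, ‖δ‖ * (d i : ℝ) := h1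
      _ = ‖δ‖ * ∑ i, (d i : ℝ) := by rw [Finset.mul_sum]
      _ ≤ ‖δ‖ * C := by
          apply mul_le_mul_of_nonneg_left _ (norm_nonneg _)
          simp [hC]
  by_cases hne : S.Nonempty
  · refine ⟨(S.inf' hne fun e => QRep.pair θ e) / C, ?_, ?_⟩
    · apply div_pos _ hCpos
      rcases Finset.exists_mem_eq_inf' hne (fun e => QRep.pair θ e) with ⟨e₁, he₁, heq⟩
      rw [heq]
      exact (Finset.mem_filter.mp he₁).2
    · intro η hη hclose M hM hss
      constructor
      · rw [hM]; exact hθ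
      · intro U hU
        by_contra hpos
        push_neg at hpos
        set e := M.subDim U with he
        have hed : ∀ i, e i ≤ d i := by
          intro i
          have : Module.finrank k (U i) ≤ Module.finrank k (M.V i) :=
            Submodule.finrank_le (U i)
          simpa [he, QRep.subDim, ← hM, QRep.dimVec] using this
        have heS : e ∈ S := by
          rw [hS, Finset.mem_filter]
          refine ⟨?_, hpos⟩
          rw [hF, Fintype.mem_piFinset]
          intro i
          simp [Nat.lt_succ_iff, hed i]
        have hinf : S.inf' hne (fun e => QRep.pair θ e) ≤ QRep.pair θ e :=
          Finset.inf'_le _ heS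
        have hηe : QRep.pair η e ≤ 0 := hss.2 U hU
        have hdiff : QRep.pair (θ - η) e ≤ ‖θ - η‖ * C := key _ _ hed
        have hsplit : QRep.pair θ e = QRep.pair (θ - η) e + QRep.pair η e := by
          simp [QRep.pair, ← Finset.sum_add_distrib, sub_mul]
        have : QRep.pair θ e ≤ ‖θ - η‖ * C := by linarith
        have hlt : ‖θ - η‖ * C < (S.inf' hne fun e => QRep.pair θ e) / C * C :=
          mul_lt_mul_of_pos_right hclose hCpos
        rw [div_mul_cancel₀ _ (ne_of_gt hCpos)] at hlt
        linarith
  · refine ⟨1, one_pos, ?_⟩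
    intro η hη hclose M hM hss
    constructor
    · rw [hM]; exact hθ
    · intro U hU
      by_contra hpos
      push_neg at hpos
      apply hne
      refine ⟨M.subDim U, ?_⟩
      rw [hS, Finset.mem_filter]
      refine ⟨?_, hpos⟩
      rw [hF, Fintype.mem_piFinset]
      intro i
      have : Module.finrank k (U i) ≤ Module.finrank k (M.V i) :=
        Submodule.finrank_le (U i)
      simp only [Finset.mem_range, Nat.lt_succ_iff]
      simpa [QRep.subDim, ← hM, QRep.dimVec] using this
end

section
/- Let L be an affine subspace of the stability space of d and θ ∈ L. Then θ is L-special (i.e. every neighborhood of θ in L contains a parameter not GIT equivalent to θ) if and only if there exists a nonzero proper subdimension vector e of d such that θ ∈ W_e and L meets the hyperplane H_e transversely. -/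
open scoped BigOperators

section Aux

variable {Q0 : Type} [Fintype Q0]

lemma pair_zero_right' (θ : Q0 → ℝ) : QRep.pair θ (0 : Q0 → ℕ) = 0 := by
  simp [QRep.pair]

lemma pair_sub_left' (θ ψ : Q0 → ℝ) (e : Q0 → ℕ) :
    QRep.pair (θ - ψ) e = QRep.pair θ e - QRep.pair ψ e := by
  simp [QRep.pair, sub_mul, Finset.sum_sub_distrib]

lemma pair_add_left' (θ ψ : Q0 → ℝ) (e : Q0 → ℕ) :
    QRep.pair (θ + ψ) e = QRep.pair θ e + QRep.pair ψ e := by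
  simp [QRep.pair, add_mul, Finset.sum_add_distrib]

lemma pair_smul_left' (r : ℝ) (θ : Q0 → ℝ) (e : Q0 → ℕ) :
    QRep.pair (r • θ) e = r * QRep.pair θ e := by
  simp [QRep.pair, Finset.mul_sum, mul_assoc]

lemma abs_pair_le' (θ : Q0 → ℝ) {e d : Q0 → ℕ} (hed : e ≤ d) :
    |QRep.pair θ e| ≤ ‖θ‖ * ∑ i, (d i : ℝ) := by
  calc |QRep.pair θ e| ≤ ∑ i, |θ i * (e i : ℝ)| := Finset.abs_sum_le_sum_abs _ _
    _ ≤ ∑ i, ‖θ‖ * (d i : ℝ) := by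
        apply Finset.sum_le_sum
        intro i _
        rw [abs_mul]
        have h1 : |θ i| ≤ ‖θ‖ := by simpa using norm_le_pi_norm θ i
        have h2 : |((e i : ℝ))| ≤ (d i : ℝ) := by
          rw [abs_of_nonneg (by positivity)]
          exact_mod_cast hed i
        exact mul_le_mul h1 h2 (abs_nonneg _) (norm_nonneg _)
    _ = ‖θ‖ * ∑ i, (d i : ℝ) := by rw [Finset.mul_sum]

lemma subDim_le_dimVec {k : Type} [Field k] {Q1 : Type} {s t : Q1 → Q0}
    (M : QRep k s t) (U : ∀ i, Submodule k (M.V i)) : M.subDim U ≤ M.dimVec :=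
  fun i => Submodule.finrank_le (U i)

end Aux

/-- for an affine subspace `L` of the stability space and `θ ∈ L`,
`θ` is `L`-special iff `θ ∈ W_e` for some nonzero proper subdimension vector `e` of `d`
such that `L` meets the hyperplane `H_e` transversely (i.e. `L` is not contained in `H_e`). -/
theorem stmt10 (k : Type) [Field k] {Q0 Q1 : Type} [Fintype Q0] (s t : Q1 → Q0)
    (d : Q0 → ℕ) (L : AffineSubspace ℝ (Q0 → ℝ))
    (hL : (L : Set (Q0 → ℝ)) ⊆ {θ : Q0 → ℝ | QRep.pair θ d = 0})
    (θ : Q0 → ℝ) (hθL : θ ∈ L) :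
    (¬ ∃ ε > (0 : ℝ), ∀ η ∈ L, ‖θ - η‖ < ε → GITEquiv k s t d θ η) ↔
      ∃ e : Q0 → ℕ, e ≤ d ∧ e ≠ 0 ∧ e ≠ d ∧ θ ∈ Wall k s t d e ∧
        ¬ ((L : Set (Q0 → ℝ)) ⊆ Hset d e) := by
  classical
  constructor
  · -- special ⇒ wall: contrapositive
    intro hspec
    by_contra hno
    push_neg at hno
    apply hspec
    -- hno : ∀ e, e ≤ d → e ≠ 0 → e ≠ d → θ ∈ Wall → L ⊆ Hset d e
    -- choose δ : positive lower bound for |pair θ e| over e ≤ d with pair θ e ≠ 0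
    set C : ℝ := ∑ i, (d i : ℝ) with hC
    have hC0 : 0 ≤ C := Finset.sum_nonneg (fun i _ => by positivity)
    set F : Finset ℝ :=
      ((Finset.Iic d).image fun e => |QRep.pair θ e|).filter (fun x => 0 < x) with hF
    set δ : ℝ := if h : F.Nonempty then F.min' h else 1 with hδ
    have hδ0 : 0 < δ := by
      rw [hδ]
      split
      · next h =>
          have := F.min'_mem h
          exact (Finset.mem_filter.1 this).2
      · norm_num
    have hδle : ∀ e : Q0 → ℕ, e ≤ d → QRep.pair θ e ≠ 0 → δ ≤ |QRep.pair θ e| := by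
      intro e hed hne
      have hmem : |QRep.pair θ e| ∈ F :=
        Finset.mem_filter.2 ⟨Finset.mem_image.2 ⟨e, Finset.mem_Iic.2 hed, rfl⟩, abs_pos.2 hne⟩
      have hne' : F.Nonempty := ⟨_, hmem⟩
      rw [hδ, dif_pos hne']
      exact F.min'_le _ hmem
    refine ⟨δ / (C + 1), by positivity, ?_⟩
    intro η hηL hclose M hMd
    -- sign-preservation
    have hkey : ∀ e : Q0 → ℕ, e ≤ d → |QRep.pair θ e - QRep.pair η e| < δ := by
      intro e hed
      calc |QRep.pair θ e - QRep.pair η e| = |QRep.pair (θ - η) e| := by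
            rw [pair_sub_left']
        _ ≤ ‖θ - η‖ * C := abs_pair_le' _ hed
        _ < δ / (C + 1) * (C + 1) := by
            have h1 : ‖θ - η‖ * C ≤ ‖θ - η‖ * (C + 1) := by
              nlinarith [norm_nonneg (θ - η)]
            have h2 : ‖θ - η‖ * (C + 1) < δ / (C + 1) * (C + 1) :=
              mul_lt_mul_of_pos_right hclose (by linarith)
            linarith
        _ = δ := by field_simp
    have hsub_le : ∀ U : ∀ i, Submodule k (M.V i), M.subDim U ≤ d :=
      fun U => hMd ▸ subDim_le_dimVec M U
    constructor
    · rintro ⟨h0, hss⟩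
      refine ⟨by rw [hMd]; exact hL hηL, ?_⟩
      intro U hU
      set e := M.subDim U with he
      have hed : e ≤ d := hsub_le U
      rcases lt_trichotomy (QRep.pair θ e) 0 with hlt | heq | hgt
      · have := hkey e hed
        have := abs_lt.1 this
        have hδe := hδle e hed (ne_of_lt hlt)
        rw [abs_of_neg hlt] at hδe
        linarith [this.2]
      · by_cases he0 : e = 0
        · rw [he0, pair_zero_right']
        by_cases hedq : e = d
        · rw [hedq]; exact le_of_eq (hL hηL)
        · have hwall : θ ∈ Wall k s t d e :=
            ⟨hL hθL, heq, M, U, hMd, hU, rfl, h0, hss⟩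
          have := hno e hed he0 hedq hwall hηL
          exact le_of_eq this.2
      · exact absurd (hss U hU) (not_le.2 hgt)
    · rintro ⟨h0, hss⟩
      refine ⟨by rw [hMd]; exact hL hθL, ?_⟩
      intro U hU
      set e := M.subDim U with he
      have hed : e ≤ d := hsub_le U
      by_contra hpos
      push_neg at hpos
      have hηe : QRep.pair η e ≤ 0 := hss U hU
      have := hkey e hed
      have := abs_lt.1 this
      have hδe := hδle e hed (ne_of_gt hpos)
      rw [abs_of_pos hpos] at hδe
      linarith [this.1]
  · -- wall ⇒ special
    rintro ⟨e, hed, he0, hedq, ⟨hθd, hθe, M, U, hMd, hU, hUe, hss⟩, hnsub⟩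
    rintro ⟨ε, hε, hgit⟩
    rw [Set.not_subset] at hnsub
    obtain ⟨η₀, hη₀L, hη₀H⟩ := hnsub
    have hη₀d : QRep.pair η₀ d = 0 := hL hη₀L
    have hη₀e : QRep.pair η₀ e ≠ 0 := by
      intro h; exact hη₀H ⟨hη₀d, h⟩
    set c := QRep.pair η₀ e with hc
    have hne : η₀ - θ ≠ 0 := by
      intro h
      have h2 : η₀ = θ := sub_eq_zero.1 h
      exact hη₀e (by rw [hc, h2]; exact hθe)
    have hnorm : 0 < ‖η₀ - θ‖ := norm_pos_iff.2 hne
    set r0 : ℝ := ε / (2 * ‖η₀ - θ‖) with hr0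
    have hr00 : 0 < r0 := by positivity
    set r : ℝ := if 0 < c then r0 else -r0 with hr
    have hrc : 0 < r * c := by
      rw [hr]
      rcases lt_trichotomy c 0 with h | h | h
      · rw [if_neg (by linarith)]
        exact mul_pos_of_neg_of_neg (by linarith) h
      · exact absurd h hη₀e
      · rw [if_pos h]; exact mul_pos hr00 h
    have habsr : |r| = r0 := by
      rw [hr]
      by_cases h : 0 < c
      · rw [if_pos h, abs_of_pos hr00]
      · rw [if_neg h, abs_neg, abs_of_pos hr00]
    set η : Q0 → ℝ := r • (η₀ - θ) + θ with hη
    have hηL : η ∈ L := by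
      have := AffineSubspace.smul_vsub_vadd_mem L r hη₀L hθL hθL
      simpa [hη, vsub_eq_sub, vadd_eq_add] using this
    have hclose : ‖θ - η‖ < ε := by
      have : θ - η = -(r • (η₀ - θ)) := by rw [hη]; module
      rw [this, norm_neg, norm_smul, Real.norm_eq_abs, habsr, hr0]
      rw [div_mul_eq_mul_div, mul_comm]
      rw [div_lt_iff₀ (by positivity)]
      nlinarith
    have hηe : 0 < QRep.pair η e := by
      rw [hη, pair_add_left', pair_smul_left', pair_sub_left', hθe, ← hc]
      linarith
    have := (hgit η hηL hclose M hMd).1 ⟨hss.1, hss.2⟩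
    have hle := this.2 U hU
    rw [hUe] at hle
    linarith
end

section
/- Let θ, η lie in the stability space of d and suppose they are not GIT equivalent. Then there exists a subdimension vector e of d such that θ and η lie strictly on opposite closed sides of the hyperplane {ζ : ζ·e = 0}: that is, θ(e) ≤ 0 and η(e) > 0, or η(e) ≤ 0 and θ(e) > 0. -/
open scoped BigOperators

lemma aux_sep (k : Type) [Field k] {Q0 Q1 : Type} [Fintype Q0] {s t : Q1 → Q0}
    (d : Q0 → ℕ) (θ η : Q0 → ℝ) (hη : QRep.pair η d = 0)
    (M : QRep k s t) (hd : M.dimVec = d) (hss : QRep.Semistable θ M)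
    (hns : ¬ QRep.Semistable η M) :
    ∃ e : Q0 → ℕ, e ≤ d ∧ QRep.pair θ e ≤ 0 ∧ 0 < QRep.pair η e := by
  rw [QRep.Semistable] at hns
  push_neg at hns
  have hη0 : QRep.pair η M.dimVec = 0 := by rw [hd]; exact hη
  obtain ⟨U, hU, hgt⟩ := hns hη0
  refine ⟨M.subDim U, ?_, hss.2 U hU, hgt⟩
  intro i
  have : Module.finrank k (U i) ≤ Module.finrank k (M.V i) :=
    Submodule.finrank_le (U i)
  simpa [QRep.subDim, ← hd, QRep.dimVec] using this

/-- if `θ, η` in the stability space of `d` are not GIT equivalent, then some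
subdimension vector `e` of `d` separates them: `θ(e) ≤ 0 < η(e)` or `η(e) ≤ 0 < θ(e)`. -/
theorem stmt17 (k : Type) [Field k] {Q0 Q1 : Type} [Fintype Q0] (s t : Q1 → Q0)
    (d : Q0 → ℕ) (θ η : Q0 → ℝ) (hθ : QRep.pair θ d = 0) (hη : QRep.pair η d = 0)
    (hne : ¬ GITEquiv k s t d θ η) :
    ∃ e : Q0 → ℕ, e ≤ d ∧
      ((QRep.pair θ e ≤ 0 ∧ 0 < QRep.pair η e) ∨
        (QRep.pair η e ≤ 0 ∧ 0 < QRep.pair θ e)) := by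
  rw [GITEquiv] at hne
  push_neg at hne
  obtain ⟨M, hd, hiff⟩ := hne
  rcases hiff with ⟨hss, hns⟩ | ⟨hns, hss⟩
  · obtain ⟨e, he, h1, h2⟩ := aux_sep k d θ η hη M hd hss hns
    exact ⟨e, he, Or.inl ⟨h1, h2⟩⟩
  · obtain ⟨e, he, h1, h2⟩ := aux_sep k d η θ hθ M hd hss hns
    exact ⟨e, he, Or.inr ⟨h1, h2⟩⟩
end
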